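/- arXiv:1503.08389 — 3 statements merged into one kernel-verified Lean document; each statement's English description precedes it below -/
import Mathlib

section
/- For the baker transformation Φ on [0,1]² and any integrable density ρ(x₁,x₂), the x₁-marginal of the pushforward density satisfies (Pρ)₁(x₁) = ½ [ρ₁(x₁/2) + ρ₁((x₁+1)/2)], where ρ₁ is the x₁-marginal of ρ. Moreover this coincides with the Frobenius–Perron operator of the dyadic map x₁ ↦ 2x₁ mod 1 applied to ρ₁; hence the information flow T_{2→1} from x₂ to x₁ under the baker transformation is zero. -/
/-!
The first coordinate of the baker map is the dyadic map of `x₁`, and the second coordinate stays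
in `[0,1]`, so the preimage of a strip `s × [0,1]` is the strip `(dyadic⁻¹ s ∩ [0,1]) × [0,1]`.
Integrating the Frobenius–Perron identity over such strips (Fubini) shows that the `x₁`-marginal
of `Pρ` is a Frobenius–Perron image of `ρ₁` under the dyadic map; so is
`½[ρ₁(x₁/2) + ρ₁((x₁+1)/2)]`, by the affine change of variables on the two branches, and two
integrable Frobenius–Perron images agree a.e. (`Pρ` is integrable by monotone convergence: its
integral over any subset of the square is at most `∫ |ρ|`). The dyadic map preserves Lebesgue
measure on `[0,1]`, so this a.e. equality survives composition with `x ↦ (Φ x)₁`, and the two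
integrands defining `T_{2→1}` agree a.e.
-/

open MeasureTheory Set

/-- The baker transformation on the unit square. -/
noncomputable def baker (p : ℝ × ℝ) : ℝ × ℝ :=
  if p.1 ≤ 1 / 2 then (2 * p.1, p.2 / 2) else (2 * p.1 - 1, (p.2 + 1) / 2)

/-- The dyadic map `x ↦ 2x mod 1` on `[0,1]`. -/
noncomputable def dyadic (t : ℝ) : ℝ := if t ≤ 1 / 2 then 2 * t else 2 * t - 1

section Affine

variable {E : Type*} [NormedAddCommGroup E] {a : ℝ}

theorem Real.measurableEmbedding_mul_add (ha : a ≠ 0) (b : ℝ) :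
    MeasurableEmbedding (fun u => a * u + b) :=
  ((Homeomorph.mulLeft₀ a ha).trans (Homeomorph.addRight b)).measurableEmbedding

theorem Real.map_volume_mul_add (ha : a ≠ 0) (b : ℝ) :
    Measure.map (fun u => a * u + b) volume = ENNReal.ofReal |a⁻¹| • volume := by
  have h : (fun u => a * u + b) = (· + b) ∘ (a * ·) := rfl
  rw [h, ← Measure.map_map (measurable_add_const b) (measurable_const_mul a),
    Real.map_volume_mul_left ha, Measure.map_smul, map_add_right_eq_self]

theorem setIntegral_preimage_mul_add [NormedSpace ℝ E] (g : ℝ → E) (s : Set ℝ) (ha : a ≠ 0)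
    (b : ℝ) : ∫ u in (fun u => a * u + b) ⁻¹' s, g (a * u + b) = |a⁻¹| • ∫ t in s, g t := by
  rw [← (Real.measurableEmbedding_mul_add ha b).setIntegral_map, Real.map_volume_mul_add ha,
    Measure.restrict_smul, integral_smul_measure, ENNReal.toReal_ofReal (abs_nonneg _)]

theorem integrableOn_preimage_mul_add_iff {g : ℝ → E} {s : Set ℝ} (ha : a ≠ 0) (b : ℝ) :
    IntegrableOn (fun u => g (a * u + b)) ((fun u => a * u + b) ⁻¹' s) ↔ IntegrableOn g s := by
  rw [← Function.comp_def, ← (Real.measurableEmbedding_mul_add ha b).integrableOn_map_iff,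
    Real.map_volume_mul_add ha, IntegrableOn, Measure.restrict_smul,
    integrable_smul_measure (by simpa using ha) ENNReal.ofReal_ne_top, IntegrableOn]

end Affine

theorem integrableOn_of_forall_setIntegral_le {α : Type*} [MeasurableSpace α] {μ : Measure α}
    {f : α → ℝ} {s : Set α} (C : ℝ) (hf : Measurable f) (hf0 : ∀ x, 0 ≤ f x)
    (hs : MeasurableSet s) (hμs : μ s ≠ ⊤)
    (hC : ∀ t ⊆ s, MeasurableSet t → ∫ x in t, f x ∂μ ≤ C) : IntegrableOn f s μ := by
  set t : ℕ → Set α := fun n => s ∩ {x | f x ≤ n}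
  have ht : ∀ n, MeasurableSet (t n) := fun n => hs.inter (measurableSet_le hf measurable_const)
  have ht_int : ∀ n, IntegrableOn f (t n) μ := fun n =>
    Measure.integrableOn_of_bounded (M := n)
      (measure_ne_top_of_subset inter_subset_left hμs) hf.aestronglyMeasurable
      ((ae_restrict_iff' (ht n)).2 (ae_of_all _ fun x hx => by
        simpa [abs_of_nonneg (hf0 x)] using hx.2))
  have ht_mono : Monotone t := fun m n hmn =>
    inter_subset_inter_right s fun x (hx : f x ≤ m) => hx.trans (Nat.cast_le.2 hmn)
  have ht_union : ⋃ n, t n = s := by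
    refine (iUnion_subset fun n => inter_subset_left).antisymm fun x hx => ?_
    obtain ⟨n, hn⟩ := exists_nat_ge (f x)
    exact mem_iUnion.2 ⟨n, hx, hn⟩
  refine ⟨hf.aestronglyMeasurable, ?_⟩
  rw [hasFiniteIntegral_iff_ofReal (ae_of_all _ hf0)]
  calc ∫⁻ x in s, ENNReal.ofReal (f x) ∂μ
      = ⨆ n, ∫⁻ x in t n, ENNReal.ofReal (f x) ∂μ := by
        rw [← ht_union, setLIntegral_iUnion_of_directed _ ht_mono.directed_le]
    _ ≤ ENNReal.ofReal C := iSup_le fun n => by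
        rw [← ofReal_integral_eq_lintegral_ofReal (ht_int n) (ae_of_all _ hf0)]
        exact ENNReal.ofReal_le_ofReal (hC _ inter_subset_left (ht n))
    _ < ⊤ := ENNReal.ofReal_lt_top

theorem MeasureTheory.IntegrableOn.integral_prod_left {α β : Type*} [MeasurableSpace α]
    [MeasurableSpace β] {μ : Measure α} {ν : Measure β} [SFinite μ] [SFinite ν]
    {f : α × β → ℝ} {s : Set α} {t : Set β} (hf : IntegrableOn f (s ×ˢ t) (μ.prod ν)) :
    IntegrableOn (fun x => ∫ y in t, f (x, y) ∂ν) s μ := by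
  rw [IntegrableOn, ← Measure.prod_restrict] at hf
  exact hf.integral_prod_left

def IsFrobeniusPerronOn {α : Type*} [MeasurableSpace α] (Φ : α → α) (μ : Measure α) (S : Set α)
    (ρ Pρ : α → ℝ) : Prop :=
  ∀ ω ⊆ S, MeasurableSet ω → ∫ p in ω, Pρ p ∂μ = ∫ p in Φ ⁻¹' ω ∩ S, ρ p ∂μ

namespace IsFrobeniusPerronOn

variable {α : Type*} [MeasurableSpace α] {μ : Measure α} {S : Set α} {ρ Pρ : α → ℝ}

theorem integrableOn {Φ : α → α} (h : IsFrobeniusPerronOn Φ μ S ρ Pρ) (hS : MeasurableSet S)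
    (hμS : μ S ≠ ⊤) (hρ : IntegrableOn ρ S μ) (hPρ : Measurable Pρ) (hPρ0 : ∀ p, 0 ≤ Pρ p) :
    IntegrableOn Pρ S μ :=
  integrableOn_of_forall_setIntegral_le (∫ p in S, ‖ρ p‖ ∂μ) hPρ hPρ0 hS hμS fun ω hω hωm =>
    calc ∫ p in ω, Pρ p ∂μ = ∫ p in Φ ⁻¹' ω ∩ S, ρ p ∂μ := h ω hω hωm
      _ ≤ ∫ p in Φ ⁻¹' ω ∩ S, ‖ρ p‖ ∂μ :=
          (Real.le_norm_self _).trans (norm_integral_le_integral_norm _)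
      _ ≤ ∫ p in S, ‖ρ p‖ ∂μ :=
          setIntegral_mono_set hρ.norm (ae_of_all _ fun _ => norm_nonneg _)
            inter_subset_right.eventuallyLE

theorem ae_eq {φ : α → α} {Pρ' : α → ℝ} (h : IsFrobeniusPerronOn φ μ S ρ Pρ)
    (h' : IsFrobeniusPerronOn φ μ S ρ Pρ') (hS : MeasurableSet S) (hPρ : IntegrableOn Pρ S μ)
    (hPρ' : IntegrableOn Pρ' S μ) : Pρ =ᵐ[μ.restrict S] Pρ' :=
  hPρ.ae_eq_of_forall_setIntegral_eq _ _ hPρ' fun s hs _ => by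
    rw [Measure.restrict_restrict hs, h _ inter_subset_right (hs.inter hS),
      h' _ inter_subset_right (hs.inter hS)]

theorem marginal {β : Type*} [MeasurableSpace β] {ν : Measure β} [SFinite μ] [SFinite ν]
    {T : Set β} {Φ : α × β → α × β} {φ : α → α} {ρ Pρ : α × β → ℝ}
    (h : IsFrobeniusPerronOn Φ (μ.prod ν) (S ×ˢ T) ρ Pρ) (hfst : ∀ p, (Φ p).1 = φ p.1)
    (hsnd : ∀ p ∈ S ×ˢ T, (Φ p).2 ∈ T) (hT : MeasurableSet T)
    (hρ : IntegrableOn ρ (S ×ˢ T) (μ.prod ν)) (hPρ : IntegrableOn Pρ (S ×ˢ T) (μ.prod ν)) :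
    IsFrobeniusPerronOn φ μ S (fun x => ∫ y in T, ρ (x, y) ∂ν)
      (fun x => ∫ y in T, Pρ (x, y) ∂ν) := by
  intro s hs hsm
  have hpre : Φ ⁻¹' (s ×ˢ T) ∩ S ×ˢ T = (φ ⁻¹' s ∩ S) ×ˢ T := by
    ext p
    simp only [mem_inter_iff, mem_preimage, mem_prod, hfst]
    exact ⟨fun ⟨⟨h1, _⟩, h2⟩ => ⟨⟨h1, h2.1⟩, h2.2⟩,
      fun ⟨⟨h1, hp1⟩, hp2⟩ => ⟨⟨h1, hsnd p ⟨hp1, hp2⟩⟩, hp1, hp2⟩⟩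
  have hsT : s ×ˢ T ⊆ S ×ˢ T := prod_mono hs subset_rfl
  rw [← setIntegral_prod _ (hPρ.mono_set hsT), h _ hsT (hsm.prod hT), hpre,
    setIntegral_prod _ (hρ.mono_set (prod_mono inter_subset_right subset_rfl))]

end IsFrobeniusPerronOn

/-- The inverse branches of `dyadic` are `t ↦ t / 2` and `t ↦ (t + 1) / 2`, both with Jacobian
`1 / 2`. -/
noncomputable def dyadicFrobeniusPerron (f : ℝ → ℝ) (t : ℝ) : ℝ :=
  (f (t / 2) + f ((t + 1) / 2)) / 2

theorem measurable_dyadic : Measurable dyadic :=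
  Measurable.ite measurableSet_Iic (measurable_const_mul 2)
    ((measurable_const_mul 2).sub_const 1)

theorem mapsTo_dyadic : MapsTo dyadic (Icc 0 1) (Icc 0 1) := by
  intro t ⟨h0, h1⟩
  unfold dyadic
  split_ifs with h
  · exact ⟨by linarith, by linarith⟩
  · exact ⟨by linarith [not_le.1 h], by linarith⟩

theorem dyadic_preimage_inter_Icc {s : Set ℝ} (hs : s ⊆ Icc 0 1) :
    dyadic ⁻¹' s ∩ Icc 0 (1 / 2) = (fun u => 2 * u) ⁻¹' s := by
  ext u
  simp only [mem_inter_iff, mem_preimage, mem_Icc]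
  constructor
  · rintro ⟨hu, -, hu2⟩
    rwa [dyadic, if_pos hu2] at hu
  · intro hu
    obtain ⟨h0, h1⟩ := hs hu
    have hu2 : u ≤ 1 / 2 := by linarith
    exact ⟨by rwa [dyadic, if_pos hu2], by linarith, hu2⟩

theorem dyadic_preimage_inter_Ioc (s : Set ℝ) :
    dyadic ⁻¹' s ∩ Ioc (1 / 2) 1 = (fun u => 2 * u - 1) ⁻¹' (s ∩ Ioc 0 1) := by
  ext u
  simp only [mem_inter_iff, mem_preimage, mem_Ioc]
  constructor
  · rintro ⟨hu, hu2, hu1⟩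
    rw [dyadic, if_neg (not_le.2 hu2)] at hu
    exact ⟨hu, by linarith, by linarith⟩
  · rintro ⟨hu, hu0, hu1⟩
    have hu2 : 1 / 2 < u := by linarith
    exact ⟨by rwa [dyadic, if_neg (not_le.2 hu2)], hu2, by linarith⟩

theorem setIntegral_preimage_two_mul (f : ℝ → ℝ) (s : Set ℝ) :
    ∫ u in (fun u => 2 * u) ⁻¹' s, f u = 2⁻¹ * ∫ t in s, f (t / 2) := by
  simpa using setIntegral_preimage_mul_add (fun t => f (t / 2)) s two_ne_zero 0

theorem setIntegral_preimage_two_mul_sub_one (f : ℝ → ℝ) (s : Set ℝ) :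
    ∫ u in (fun u => 2 * u - 1) ⁻¹' s, f u = 2⁻¹ * ∫ t in s, f ((t + 1) / 2) := by
  simpa [← sub_eq_add_neg] using
    setIntegral_preimage_mul_add (fun t => f ((t + 1) / 2)) s two_ne_zero (-1)

theorem MeasureTheory.IntegrableOn.comp_half {f : ℝ → ℝ} (hf : IntegrableOn f (Icc 0 1)) :
    IntegrableOn (fun t => f (t / 2)) (Icc 0 1) := by
  have h := integrableOn_preimage_mul_add_iff (g := fun t => f (t / 2)) (s := Icc (0 : ℝ) 1)
    two_ne_zero 0
  simp only [add_zero, mul_div_cancel_left₀ _ (two_ne_zero' ℝ)] at h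
  exact h.1 (hf.mono_set fun u ⟨h0, h1⟩ => ⟨by linarith, by linarith⟩)

theorem MeasureTheory.IntegrableOn.comp_add_one_half {f : ℝ → ℝ}
    (hf : IntegrableOn f (Icc 0 1)) :
    IntegrableOn (fun t => f ((t + 1) / 2)) (Icc 0 1) := by
  have h := integrableOn_preimage_mul_add_iff (g := fun t => f ((t + 1) / 2))
    (s := Icc (0 : ℝ) 1) two_ne_zero (-1)
  simp only [neg_add_cancel_right, mul_div_cancel_left₀ _ (two_ne_zero' ℝ)] at h
  exact h.1 (hf.mono_set fun u ⟨h0, h1⟩ => ⟨by linarith, by linarith⟩)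

theorem integrableOn_dyadicFrobeniusPerron {f : ℝ → ℝ} (hf : IntegrableOn f (Icc 0 1)) :
    IntegrableOn (dyadicFrobeniusPerron f) (Icc 0 1) :=
  (hf.comp_half.add hf.comp_add_one_half).div_const 2

theorem isFrobeniusPerronOn_dyadic {f : ℝ → ℝ} (hf : IntegrableOn f (Icc 0 1)) :
    IsFrobeniusPerronOn dyadic volume (Icc 0 1) f (dyadicFrobeniusPerron f) := by
  intro s hs hsm
  -- `dyadic (1 / 2) = 1`: the right branch only reaches `s ∩ Ioc 0 1`, and `{0}` is null
  have hIoc : (s ∩ Ioc 0 1 : Set ℝ) =ᵐ[volume] s := by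
    simpa [inter_eq_left.2 hs] using
      (Filter.EventuallyEq.rfl : s =ᵐ[volume] s).inter (Ioc_ae_eq_Icc (a := (0 : ℝ)) (b := 1))
  have hdisj : Disjoint (dyadic ⁻¹' s ∩ Icc 0 (1 / 2)) (dyadic ⁻¹' s ∩ Ioc (1 / 2) 1) :=
    (Iic_disjoint_Ioi le_rfl).mono (inter_subset_right.trans Icc_subset_Iic_self)
      (inter_subset_right.trans Ioc_subset_Ioi_self)
  have hleft : IntegrableOn f (dyadic ⁻¹' s ∩ Icc 0 (1 / 2)) :=
    hf.mono_set (inter_subset_right.trans (Icc_subset_Icc_right (by norm_num)))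
  have hright : IntegrableOn f (dyadic ⁻¹' s ∩ Ioc (1 / 2) 1) :=
    hf.mono_set (inter_subset_right.trans (Ioc_subset_Icc_self.trans
      (Icc_subset_Icc_left (by norm_num))))
  rw [← Icc_union_Ioc_eq_Icc (by norm_num : (0 : ℝ) ≤ 1 / 2) (by norm_num),
    inter_union_distrib_left,
    setIntegral_union hdisj ((measurable_dyadic hsm).inter measurableSet_Ioc) hleft hright,
    dyadic_preimage_inter_Icc hs, dyadic_preimage_inter_Ioc, setIntegral_preimage_two_mul,
    setIntegral_preimage_two_mul_sub_one, setIntegral_congr_set hIoc]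
  unfold dyadicFrobeniusPerron
  rw [integral_div,
    integral_add (hf.comp_half.mono_set hs) (hf.comp_add_one_half.mono_set hs)]
  ring

theorem measurePreserving_dyadic :
    MeasurePreserving dyadic (volume.restrict (Icc 0 1)) (volume.restrict (Icc 0 1)) where
  measurable := measurable_dyadic
  map_eq := by
    ext s hs
    have hfinite {t : Set ℝ} : volume (t ∩ Icc 0 1) ≠ ⊤ :=
      measure_ne_top_of_subset inter_subset_right measure_Icc_lt_top.ne
    have h := isFrobeniusPerronOn_dyadic (integrableOn_const (C := 1) measure_Icc_lt_top.ne)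
      (s ∩ Icc 0 1) inter_subset_right (hs.inter measurableSet_Icc)
    rw [Measure.map_apply measurable_dyadic hs, Measure.restrict_apply (measurable_dyadic hs),
      Measure.restrict_apply hs]
    simp only [dyadicFrobeniusPerron, add_self_div_two, integral_const, MeasurableSet.univ,
      measureReal_restrict_apply, univ_inter, smul_eq_mul, mul_one, preimage_inter] at h
    rw [inter_assoc, inter_eq_right.2 mapsTo_dyadic.subset_preimage,
      measureReal_eq_measureReal_iff hfinite hfinite] at h
    exact h.symm

theorem fst_baker (p : ℝ × ℝ) : (baker p).1 = dyadic p.1 := by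
  unfold baker dyadic
  split_ifs <;> rfl

theorem snd_baker_mem_Icc {p : ℝ × ℝ} (hp : p.2 ∈ Icc (0 : ℝ) 1) :
    (baker p).2 ∈ Icc (0 : ℝ) 1 := by
  obtain ⟨h0, h1⟩ := hp
  unfold baker
  split_ifs
  · exact ⟨by linarith, by linarith⟩
  · exact ⟨by linarith, by linarith⟩

theorem quasiMeasurePreserving_fst_baker :
    Measure.QuasiMeasurePreserving (fun p => (baker p).1)
      (volume.restrict (Icc (0 : ℝ) 1 ×ˢ Icc (0 : ℝ) 1)) (volume.restrict (Icc 0 1)) := by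
  rw [funext fst_baker, Measure.volume_eq_prod, ← Measure.prod_restrict]
  exact measurePreserving_dyadic.quasiMeasurePreserving.comp Measure.quasiMeasurePreserving_fst

theorem baker_marginal_and_zero_flow_general
    (ρ Pρ : ℝ × ℝ → ℝ) (hPρmeas : Measurable Pρ)
    (hPρ0 : ∀ p, 0 ≤ Pρ p)
    (hρint : IntegrableOn ρ (Set.Icc (0:ℝ) 1 ×ˢ Set.Icc (0:ℝ) 1))
    (hFP : ∀ ω : Set (ℝ × ℝ), ω ⊆ Set.Icc (0:ℝ) 1 ×ˢ Set.Icc (0:ℝ) 1 →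
      MeasurableSet ω →
      ∫ p in ω, Pρ p
        = ∫ p in (baker ⁻¹' ω) ∩ (Set.Icc (0:ℝ) 1 ×ˢ Set.Icc (0:ℝ) 1), ρ p)
    (ρ₁ : ℝ → ℝ) (hρ₁ : ∀ t, ρ₁ t = ∫ x₂ in Set.Icc (0:ℝ) 1, ρ (t, x₂)) :
    (∀ᵐ x₁ ∂(volume.restrict (Set.Icc (0:ℝ) 1)),
      (∫ x₂ in Set.Icc (0:ℝ) 1, Pρ (x₁, x₂))
        = (ρ₁ (x₁ / 2) + ρ₁ ((x₁ + 1) / 2)) / 2) ∧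
    (∀ s : Set ℝ, s ⊆ Set.Icc (0:ℝ) 1 → MeasurableSet s →
      ∫ t in s, (ρ₁ (t / 2) + ρ₁ ((t + 1) / 2)) / 2
        = ∫ t in (dyadic ⁻¹' s) ∩ Set.Icc (0:ℝ) 1, ρ₁ t) ∧
    (∫ p in Set.Icc (0:ℝ) 1 ×ˢ Set.Icc (0:ℝ) 1,
        ρ p * Real.log ((ρ₁ ((baker p).1 / 2) + ρ₁ (((baker p).1 + 1) / 2)) / 2))
      - (∫ p in Set.Icc (0:ℝ) 1 ×ˢ Set.Icc (0:ℝ) 1,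
        ρ p * Real.log (∫ x₂ in Set.Icc (0:ℝ) 1, Pρ ((baker p).1, x₂))) = 0 := by
  obtain rfl : ρ₁ = fun t => ∫ x₂ in Icc (0 : ℝ) 1, ρ (t, x₂) := funext hρ₁
  have hPρint : IntegrableOn Pρ (Icc (0 : ℝ) 1 ×ˢ Icc (0 : ℝ) 1) :=
    IsFrobeniusPerronOn.integrableOn hFP (measurableSet_Icc.prod measurableSet_Icc)
      (isCompact_Icc.prod isCompact_Icc).measure_lt_top.ne hρint hPρmeas hPρ0
  rw [Measure.volume_eq_prod] at hρint hPρint hFP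
  have hmarg := IsFrobeniusPerronOn.marginal hFP fst_baker (fun p hp => snd_baker_mem_Icc hp.2)
    measurableSet_Icc hρint hPρint
  have hdyadic := isFrobeniusPerronOn_dyadic hρint.integral_prod_left
  have hae := hmarg.ae_eq hdyadic measurableSet_Icc hPρint.integral_prod_left
    (integrableOn_dyadicFrobeniusPerron hρint.integral_prod_left)
  refine ⟨hae, hdyadic, sub_eq_zero.2 (integral_congr_ae ?_)⟩
  filter_upwards [quasiMeasurePreserving_fst_baker.ae_eq_comp hae] with p hp
  exact congrArg (ρ p * Real.log ·) hp.symm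

/-- For the baker transformation, the `x₁`-marginal of the pushforward
density satisfies `(Pρ)₁(x₁) = ½[ρ₁(x₁/2) + ρ₁((x₁+1)/2)]` a.e.; this coincides with
the Frobenius–Perron operator of the dyadic map applied to `ρ₁`; and consequently the
information flow `T_{2→1}` vanishes. -/
theorem baker_marginal_and_zero_flow
    (ρ Pρ : ℝ × ℝ → ℝ) (hρmeas : Measurable ρ) (hPρmeas : Measurable Pρ)
    (hρ0 : ∀ p, 0 ≤ ρ p) (hPρ0 : ∀ p, 0 ≤ Pρ p)
    (hρint : IntegrableOn ρ (Set.Icc (0:ℝ) 1 ×ˢ Set.Icc (0:ℝ) 1))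
    (hFP : ∀ ω : Set (ℝ × ℝ), ω ⊆ Set.Icc (0:ℝ) 1 ×ˢ Set.Icc (0:ℝ) 1 →
      MeasurableSet ω →
      ∫ p in ω, Pρ p
        = ∫ p in (baker ⁻¹' ω) ∩ (Set.Icc (0:ℝ) 1 ×ˢ Set.Icc (0:ℝ) 1), ρ p)
    (ρ₁ : ℝ → ℝ) (hρ₁ : ∀ t, ρ₁ t = ∫ x₂ in Set.Icc (0:ℝ) 1, ρ (t, x₂)) :
    (∀ᵐ x₁ ∂(volume.restrict (Set.Icc (0:ℝ) 1)),
      (∫ x₂ in Set.Icc (0:ℝ) 1, Pρ (x₁, x₂))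
        = (ρ₁ (x₁ / 2) + ρ₁ ((x₁ + 1) / 2)) / 2) ∧
    (∀ s : Set ℝ, s ⊆ Set.Icc (0:ℝ) 1 → MeasurableSet s →
      ∫ t in s, (ρ₁ (t / 2) + ρ₁ ((t + 1) / 2)) / 2
        = ∫ t in (dyadic ⁻¹' s) ∩ Set.Icc (0:ℝ) 1, ρ₁ t) ∧
    (∫ p in Set.Icc (0:ℝ) 1 ×ˢ Set.Icc (0:ℝ) 1,
        ρ p * Real.log ((ρ₁ ((baker p).1 / 2) + ρ₁ (((baker p).1 + 1) / 2)) / 2))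
      - (∫ p in Set.Icc (0:ℝ) 1 ×ˢ Set.Icc (0:ℝ) 1,
        ρ p * Real.log (∫ x₂ in Set.Icc (0:ℝ) 1, Pρ ((baker p).1, x₂))) = 0 :=
  baker_marginal_and_zero_flow_general ρ Pρ hPρmeas hPρ0 hρint hFP ρ₁ hρ₁
end

section
/- For the baker transformation, the information flow from x₁ to x₂, given by T_{1→2} = I + II where I = ∫₀^{1/2} ρ₂(x₂) log( ∫₀¹ ρ(λ,x₂) dλ / ∫₀^{1/2} ρ(λ,x₂) dλ ) dx₂ and II = ∫_{1/2}^1 ρ₂(x₂) log( ∫₀¹ ρ(λ,x₂) dλ / ∫_{1/2}^1 ρ(λ,x₂) dλ ) dx₂, is strictly positive for every strictly positive continuous density ρ on [0,1]². -/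
/-! Split `∫₀¹ ρ(u, x₂) du` at `1/2`: both halves are positive, so each logarithm in `I` and `II`
has argument `> 1`, and `ρ₂ > 0`. Both integrands are therefore positive and continuous in `x₂`,
which makes `I` and `II` strictly positive. -/

open MeasureTheory Set

lemma setIntegral_Icc_eq_intervalIntegral {f : ℝ → ℝ} {a b : ℝ} (hab : a ≤ b) :
    ∫ x in Icc a b, f x = ∫ x in a..b, f x := by
  rw [integral_Icc_eq_integral_Ioc, intervalIntegral.integral_of_le hab]

lemma setIntegral_Icc_pos {f : ℝ → ℝ} {a b : ℝ} (hab : a < b) (hf : ContinuousOn f (Icc a b))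
    (hpos : ∀ x ∈ Icc a b, 0 < f x) : 0 < ∫ x in Icc a b, f x := by
  rw [setIntegral_Icc_eq_intervalIntegral hab.le]
  exact intervalIntegral.intervalIntegral_pos_of_pos_on (hf.intervalIntegrable_of_Icc hab.le)
    (fun x hx => hpos x (Ioo_subset_Icc_self hx)) hab

lemma setIntegral_Icc_add_Icc {f : ℝ → ℝ} {a b c : ℝ} (hab : a ≤ b) (hbc : b ≤ c)
    (hf : ContinuousOn f (Icc a c)) :
    ∫ x in Icc a c, f x = (∫ x in Icc a b, f x) + ∫ x in Icc b c, f x := by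
  rw [setIntegral_Icc_eq_intervalIntegral (hab.trans hbc), setIntegral_Icc_eq_intervalIntegral hab,
    setIntegral_Icc_eq_intervalIntegral hbc, intervalIntegral.integral_add_adjacent_intervals]
  · exact (hf.mono (Icc_subset_Icc le_rfl hbc)).intervalIntegrable_of_Icc hab
  · exact (hf.mono (Icc_subset_Icc hab le_rfl)).intervalIntegrable_of_Icc hbc

lemma setIntegral_mul_log_div_pos {N D : ℝ → ℝ} {a b : ℝ} (hab : a < b)
    (hN : ContinuousOn N (Icc a b)) (hD : ContinuousOn D (Icc a b))
    (hD_pos : ∀ t ∈ Icc a b, 0 < D t) (hDN : ∀ t ∈ Icc a b, D t < N t) :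
    0 < ∫ t in Icc a b, N t * Real.log (N t / D t) := by
  refine setIntegral_Icc_pos hab (hN.mul ((hN.div hD ?_).log ?_)) fun t ht => ?_
  · exact fun t ht => (hD_pos t ht).ne'
  · exact fun t ht => (div_pos ((hD_pos t ht).trans (hDN t ht)) (hD_pos t ht)).ne'
  · exact mul_pos ((hD_pos t ht).trans (hDN t ht))
      (Real.log_pos ((one_lt_div (hD_pos t ht)).2 (hDN t ht)))

section Sections

variable {ρ : ℝ × ℝ → ℝ} {a b c d : ℝ}

-- Extend `ρ` continuously to the plane by precomposing with the projections onto the intervals.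
lemma continuousOn_setIntegral_Icc_section (hab : a ≤ b) (hcd : c ≤ d)
    (hρ : ContinuousOn ρ (Icc a b ×ˢ Icc c d)) :
    ContinuousOn (fun t => ∫ u in Icc a b, ρ (u, t)) (Icc c d) := by
  set g : ℝ × ℝ → ℝ := fun p => ρ (projIcc a b hab p.1, projIcc c d hcd p.2)
  have hg : Continuous g := hρ.comp_continuous (by fun_prop)
    fun p => ⟨(projIcc a b hab p.1).2, (projIcc c d hcd p.2).2⟩
  refine ((continuous_parametric_integral_of_continuous
    (μ := volume) (f := fun t u => g (u, t)) (by fun_prop)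
    (isCompact_Icc (a := a) (b := b))).continuousOn).congr fun t ht => ?_
  refine setIntegral_congr_fun measurableSet_Icc fun u hu => ?_
  simp only [g, projIcc_of_mem hab hu, projIcc_of_mem hcd ht]

lemma setIntegral_Icc_section_pos {s : Set ℝ} {t : ℝ} (hab : a < b)
    (hρ : ContinuousOn ρ (Icc a b ×ˢ s)) (hρ_pos : ∀ p ∈ Icc a b ×ˢ s, 0 < ρ p) (ht : t ∈ s) :
    0 < ∫ u in Icc a b, ρ (u, t) :=
  setIntegral_Icc_pos hab (hρ.comp (by fun_prop) fun u hu => ⟨hu, ht⟩)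
    fun u hu => hρ_pos _ ⟨hu, ht⟩

end Sections

theorem baker_T12_positive_general
    (ρ : ℝ × ℝ → ℝ)
    (hρcont : ContinuousOn ρ (Set.Icc (0:ℝ) 1 ×ˢ Set.Icc (0:ℝ) 1))
    (hρpos : ∀ p ∈ Set.Icc (0:ℝ) 1 ×ˢ Set.Icc (0:ℝ) 1, 0 < ρ p)
    (ρ₂ : ℝ → ℝ) (hρ₂ : ∀ t, ρ₂ t = ∫ x₁ in Set.Icc (0:ℝ) 1, ρ (x₁, t))
    (I II : ℝ)
    (hI : I = ∫ x₂ in Set.Icc (0:ℝ) (1/2), ρ₂ x₂ *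
      Real.log ((∫ u in Set.Icc (0:ℝ) 1, ρ (u, x₂)) /
                (∫ u in Set.Icc (0:ℝ) (1/2), ρ (u, x₂))))
    (hII : II = ∫ x₂ in Set.Icc (1/2 : ℝ) 1, ρ₂ x₂ *
      Real.log ((∫ u in Set.Icc (0:ℝ) 1, ρ (u, x₂)) /
                (∫ u in Set.Icc (1/2 : ℝ) 1, ρ (u, x₂)))) :
    0 ≤ I ∧ 0 ≤ II ∧ 0 < I + II := by
  have hsub : ∀ {a b : ℝ}, 0 ≤ a → b ≤ 1 → Icc a b ×ˢ Icc (0:ℝ) 1 ⊆ Icc 0 1 ×ˢ Icc 0 1 :=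
    fun ha hb => prod_mono (Icc_subset_Icc ha hb) le_rfl
  have hcont : ∀ {a b : ℝ}, 0 ≤ a → a ≤ b → b ≤ 1 →
      ContinuousOn (fun t => ∫ u in Icc a b, ρ (u, t)) (Icc 0 1) := fun ha hab hb =>
    continuousOn_setIntegral_Icc_section hab zero_le_one (hρcont.mono (hsub ha hb))
  have hpos : ∀ {a b t : ℝ}, 0 ≤ a → a < b → b ≤ 1 → t ∈ Icc (0:ℝ) 1 →
      0 < ∫ u in Icc a b, ρ (u, t) := fun ha hab hb =>
    setIntegral_Icc_section_pos hab (hρcont.mono (hsub ha hb)) fun p hp => hρpos p (hsub ha hb hp)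
  have hsplit : ∀ t ∈ Icc (0:ℝ) 1, ∫ u in Icc (0:ℝ) 1, ρ (u, t) =
      (∫ u in Icc (0:ℝ) (1/2), ρ (u, t)) + ∫ u in Icc (1/2 : ℝ) 1, ρ (u, t) := fun t ht =>
    setIntegral_Icc_add_Icc (by norm_num) (by norm_num)
      (hρcont.comp (by fun_prop) fun u hu => ⟨hu, ht⟩)
  have hleft : Icc (0:ℝ) (1/2) ⊆ Icc 0 1 := Icc_subset_Icc le_rfl (by norm_num)
  have hright : Icc (1/2 : ℝ) 1 ⊆ Icc 0 1 := Icc_subset_Icc (by norm_num) le_rfl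
  simp only [hρ₂] at hI hII
  have hI_pos : 0 < I := hI ▸ setIntegral_mul_log_div_pos (by norm_num)
    ((hcont le_rfl zero_le_one le_rfl).mono hleft)
    ((hcont le_rfl (by norm_num) (by norm_num)).mono hleft)
    (fun t ht => hpos le_rfl (by norm_num) (by norm_num) (hleft ht))
    fun t ht => by
      rw [hsplit t (hleft ht)]
      exact lt_add_of_pos_right _ (hpos (by norm_num) (by norm_num) le_rfl (hleft ht))
  have hII_pos : 0 < II := hII ▸ setIntegral_mul_log_div_pos (by norm_num)
    ((hcont le_rfl zero_le_one le_rfl).mono hright)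
    ((hcont (by norm_num) (by norm_num) le_rfl).mono hright)
    (fun t ht => hpos (by norm_num) (by norm_num) le_rfl (hright ht))
    fun t ht => by
      rw [hsplit t (hright ht)]
      exact lt_add_of_pos_left _ (hpos le_rfl (by norm_num) (by norm_num) (hright ht))
  exact ⟨hI_pos.le, hII_pos.le, add_pos hI_pos hII_pos⟩

/-- For the baker transformation, the information flow
`T_{1→2} = I + II` (with `I`, `II` the two logarithmic integrals below) is strictly
positive for every strictly positive continuous density `ρ` on `[0,1]²`:
indeed `I ≥ 0`, `II ≥ 0` and `I + II > 0`. -/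
theorem baker_T12_positive
    (ρ : ℝ × ℝ → ℝ)
    (hρcont : ContinuousOn ρ (Set.Icc (0:ℝ) 1 ×ˢ Set.Icc (0:ℝ) 1))
    (hρpos : ∀ p ∈ Set.Icc (0:ℝ) 1 ×ˢ Set.Icc (0:ℝ) 1, 0 < ρ p)
    (hρnorm : ∫ p in Set.Icc (0:ℝ) 1 ×ˢ Set.Icc (0:ℝ) 1, ρ p = 1)
    (ρ₂ : ℝ → ℝ) (hρ₂ : ∀ t, ρ₂ t = ∫ x₁ in Set.Icc (0:ℝ) 1, ρ (x₁, t))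
    (I II : ℝ)
    (hI : I = ∫ x₂ in Set.Icc (0:ℝ) (1/2), ρ₂ x₂ *
      Real.log ((∫ u in Set.Icc (0:ℝ) 1, ρ (u, x₂)) /
                (∫ u in Set.Icc (0:ℝ) (1/2), ρ (u, x₂))))
    (hII : II = ∫ x₂ in Set.Icc (1/2 : ℝ) 1, ρ₂ x₂ *
      Real.log ((∫ u in Set.Icc (0:ℝ) 1, ρ (u, x₂)) /
                (∫ u in Set.Icc (1/2 : ℝ) 1, ρ (u, x₂)))) :
    0 ≤ I ∧ 0 ≤ II ∧ 0 < I + II :=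
  baker_T12_positive_general ρ hρcont hρpos ρ₂ hρ₂ I II hI hII
end

section
/- Consider the stochastic mapping x(τ+1) = Φ(x(τ)) + B w with Φ: ℝⁿ → ℝⁿ measurable nonsingular, B a constant n×m matrix with first row B₁, and w standard Gaussian in ℝᵐ independent of x. If Φ₁ does not depend on x₂ (and B₁ is constant, hence independent of x₂), then the information flow T_{2→1} = E_x[log E_w (P_{Φ∖2}ρ)₁(y₁ − B₁w)] − E_x[log E_w (P_Φρ)₁(y₁ − B₁w)] vanishes. -/
open MeasureTheory Matrix Real

/-!
Since `Φ₁` does not depend on `x₂`, Fubini shows that the law of `Φ₁(x)` under `ρ` is the law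
of `(Φ∖2)₁(x₁, z)` under the marginal density `ρ∖2`, so the two marginal densities `p` and `q`
agree almost everywhere. The law of `Φ₁(x) + B₁w' − B₁w` is absolutely continuous (a translate
of the law of `Φ₁(x)` for each fixed noise), hence `p` and `q` may be exchanged inside the
expectations, and the two terms of `T_{2→1}` coincide.
-/

section Marginal

variable {α β γ : Type*} [MeasurableSpace α] [MeasurableSpace β] [MeasurableSpace γ]
  {μ : Measure α} {ν : Measure β} {κ : Measure γ} [SFinite μ] [SFinite ν] [SFinite κ]

theorem measurePreserving_prodRotate :
    MeasurePreserving (fun x : α × β × γ => ((x.1, x.2.2), x.2.1))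
      (μ.prod (ν.prod κ)) ((μ.prod κ).prod ν) :=
  (measurePreserving_prodAssoc μ κ ν).symm.comp
    ((MeasurePreserving.id μ).prod Measure.measurePreserving_swap)

theorem setIntegral_preimage_fst_snd_snd {f : α × β × γ → ℝ}
    (hf : Integrable f (μ.prod (ν.prod κ))) (s : Set (α × γ)) :
    ∫ x in (fun x => (x.1, x.2.2)) ⁻¹' s, f x ∂μ.prod (ν.prod κ)
      = ∫ r in s, ∫ y, f (r.1, y, r.2) ∂ν ∂μ.prod κ := by
  let e : α × β × γ ≃ᵐ (α × γ) × β :=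
    (MeasurableEquiv.prodCongr (.refl α) .prodComm).trans MeasurableEquiv.prodAssoc.symm
  have he : MeasurePreserving e (μ.prod (ν.prod κ)) ((μ.prod κ).prod ν) :=
    measurePreserving_prodRotate
  have hint : Integrable (f ∘ e.symm) ((μ.prod κ).prod ν) := by
    rw [← he.integrable_comp_emb e.measurableEmbedding]
    simpa [Function.comp_def] using hf
  calc ∫ x in (fun x => (x.1, x.2.2)) ⁻¹' s, f x ∂μ.prod (ν.prod κ)
      = ∫ x in e ⁻¹' (s ×ˢ Set.univ), (f ∘ e.symm) (e x) ∂μ.prod (ν.prod κ) := by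
        simp only [Function.comp_apply, MeasurableEquiv.symm_apply_apply]
        congr 2
        ext x
        exact (and_true _).symm.to_iff
    _ = ∫ y in s ×ˢ Set.univ, (f ∘ e.symm) y ∂(μ.prod κ).prod ν :=
        he.setIntegral_preimage_emb e.measurableEmbedding _ _
    _ = ∫ r in s, ∫ y, f (r.1, y, r.2) ∂ν ∂μ.prod κ := by
        rw [setIntegral_prod _ hint.integrableOn, Measure.restrict_univ]
        rfl

theorem setIntegral_preimage_eq_of_eq_comp_fst_snd_snd {δ : Type*} {f : α × β × γ → ℝ}
    (hf : Integrable f (μ.prod (ν.prod κ))) {φ : α × β × γ → δ} {ψ : α × γ → δ}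
    (hφψ : ∀ x, φ x = ψ (x.1, x.2.2)) (s : Set δ) :
    ∫ x in φ ⁻¹' s, f x ∂μ.prod (ν.prod κ) = ∫ r in ψ ⁻¹' s, ∫ y, f (r.1, y, r.2) ∂ν ∂μ.prod κ := by
  have hpre : φ ⁻¹' s = (fun x => (x.1, x.2.2)) ⁻¹' (ψ ⁻¹' s) := by
    ext x
    simp only [Set.mem_preimage, hφψ]
  rw [hpre]
  exact setIntegral_preimage_fst_snd_snd hf _

end Marginal

theorem ae_eq_of_forall_setIntegral_eq_of_integral_ne_zero {α : Type*} [MeasurableSpace α]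
    {μ : Measure α} [SigmaFinite μ] {p q : α → ℝ}
    (hpq : ∀ s, MeasurableSet s → ∫ t in s, p t ∂μ = ∫ t in s, q t ∂μ) (hp : ∫ t, p t ∂μ ≠ 0) :
    p =ᵐ[μ] q := by
  have hq : ∫ t, q t ∂μ ≠ 0 := by
    rwa [← setIntegral_univ, ← hpq Set.univ MeasurableSet.univ, setIntegral_univ]
  exact ae_eq_of_forall_setIntegral_eq_of_sigmaFinite
    (fun _ _ _ => (Integrable.of_integral_ne_zero hp).integrableOn)
    (fun _ _ _ => (Integrable.of_integral_ne_zero hq).integrableOn)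
    (fun s hs _ => hpq s hs)

theorem quasiMeasurePreserving_withDensity_of_forall_setIntegral_eq {α β : Type*}
    [MeasurableSpace α] [MeasurableSpace β] {μ : Measure α} {ν : Measure β} {f : α → β}
    (hf : Measurable f) {ρ : α → ℝ} (hρ0 : 0 ≤ᵐ[μ] ρ) (hρ : Integrable ρ μ) {p : β → ℝ}
    (hp : ∀ s, MeasurableSet s → ∫ t in s, p t ∂ν = ∫ x in f ⁻¹' s, ρ x ∂μ) :
    Measure.QuasiMeasurePreserving f (μ.withDensity fun x => ENNReal.ofReal (ρ x)) ν := by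
  refine ⟨hf, Measure.AbsolutelyContinuous.mk fun s hs hνs => ?_⟩
  rw [Measure.map_apply hf hs, withDensity_apply _ (hf hs),
    ← ofReal_integral_eq_lintegral_ofReal hρ.integrableOn (ae_restrict_of_ae hρ0), ← hp s hs,
    Measure.restrict_eq_zero.mpr hνs, integral_zero_measure, ENNReal.ofReal_zero]

theorem MeasureTheory.Measure.QuasiMeasurePreserving.add_comp_snd {α δ G : Type*}
    [MeasurableSpace α] [MeasurableSpace δ] [MeasurableSpace G] [AddGroup G] [MeasurableAdd₂ G]
    {μ : Measure α} {ν : Measure δ} [SFinite μ] [SFinite ν] {m : Measure G}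
    [m.IsAddRightInvariant] {f : α → G} {g : δ → G}
    (hf : Measure.QuasiMeasurePreserving f μ m) (hg : Measurable g) :
    Measure.QuasiMeasurePreserving (fun z : α × δ => f z.1 + g z.2) (μ.prod ν) m := by
  have hmeas : Measurable fun z : α × δ => f z.1 + g z.2 :=
    (hf.measurable.comp measurable_fst).add (hg.comp measurable_snd)
  refine ⟨hmeas, Measure.AbsolutelyContinuous.mk fun s hs hs0 => ?_⟩
  have hsection : ∀ y, μ ((fun x => (x, y)) ⁻¹' ((fun z : α × δ => f z.1 + g z.2) ⁻¹' s)) = 0 :=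
    fun y => hf.preimage_null ((measure_preimage_add_right m (g y) s).trans hs0)
  rw [Measure.map_apply hmeas hs, Measure.prod_apply_symm (hmeas hs)]
  exact (lintegral_congr hsection).trans lintegral_zero

theorem stochastic_map_causality_general {k m : ℕ}
    (Φ : (ℝ × ℝ × (Fin k → ℝ)) → (ℝ × ℝ × (Fin k → ℝ))) (hΦ : Measurable Φ)
    (Φm2 : (ℝ × (Fin k → ℝ)) → (ℝ × (Fin k → ℝ)))
    (hreduced : ∀ (x₁ x₂ : ℝ) (z : Fin k → ℝ), (Φm2 (x₁, z)).1 = (Φ (x₁, x₂, z)).1)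
    (B₁ : Fin m → ℝ)
    (ρw : (Fin m → ℝ) → ℝ)
    (ρ : (ℝ × ℝ × (Fin k → ℝ)) → ℝ) (hρmeas : Measurable ρ)
    (hρ0 : ∀ x, 0 ≤ ρ x) (hρint : Integrable ρ)
    (ρm2 : (ℝ × (Fin k → ℝ)) → ℝ)
    (hρm2 : ∀ (x₁ : ℝ) (z : Fin k → ℝ), ρm2 (x₁, z) = ∫ x₂ : ℝ, ρ (x₁, x₂, z))
    (p q : ℝ → ℝ)
    (hp : ∀ s : Set ℝ, MeasurableSet s →
      ∫ t in s, p t = ∫ x in {x : ℝ × ℝ × (Fin k → ℝ) | (Φ x).1 ∈ s}, ρ x)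
    (hq : ∀ s : Set ℝ, MeasurableSet s →
      ∫ t in s, q t = ∫ x in {x : ℝ × (Fin k → ℝ) | (Φm2 x).1 ∈ s}, ρm2 x) :
    (∫ x : ℝ × ℝ × (Fin k → ℝ), ρ x * ∫ w' : Fin m → ℝ, ρw w' *
        Real.log (∫ w : Fin m → ℝ, ρw w * q ((Φ x).1 + B₁ ⬝ᵥ w' - B₁ ⬝ᵥ w)))
      - (∫ x : ℝ × ℝ × (Fin k → ℝ), ρ x * ∫ w' : Fin m → ℝ, ρw w' *
        Real.log (∫ w : Fin m → ℝ, ρw w * p ((Φ x).1 + B₁ ⬝ᵥ w' - B₁ ⬝ᵥ w))) = 0 := by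
  have hpq_set : ∀ s, MeasurableSet s → ∫ t in s, p t = ∫ t in s, q t := fun s hs => by
    rw [hp s hs, hq s hs]
    exact (setIntegral_preimage_eq_of_eq_comp_fst_snd_snd hρint
      (fun x => (hreduced x.1 x.2.1 x.2.2).symm) s).trans
      (congrArg _ (funext fun r => (hρm2 r.1 r.2).symm))
  rw [sub_eq_zero]
  refine integral_congr_ae ?_
  -- `hp` and `hq` make `p` and `q` integrable only when `∫ ρ ≠ 0`.
  by_cases hρ : ∫ x, ρ x = 0
  · filter_upwards [(integral_eq_zero_iff_of_nonneg hρ0 hρint).mp hρ] with x hx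
    simp [hx]
  have hp_univ : ∫ t, p t = ∫ x, ρ x := by
    simpa only [Set.mem_univ, Set.ofPred_true, Measure.restrict_univ]
      using hp Set.univ MeasurableSet.univ
  have hpq : p =ᵐ[volume] q :=
    ae_eq_of_forall_setIntegral_eq_of_integral_ne_zero hpq_set (hp_univ ▸ hρ)
  have hΦ₁ := quasiMeasurePreserving_withDensity_of_forall_setIntegral_eq hΦ.fst
    (ae_of_all _ hρ0) hρint hp
  have hshift := hΦ₁.add_comp_snd (ν := (volume : Measure ((Fin m → ℝ) × (Fin m → ℝ))))
    (g := fun w => B₁ ⬝ᵥ w.1 - B₁ ⬝ᵥ w.2) (by fun_prop)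
  have hae := Measure.ae_ae_of_ae_prod (hshift.ae_eq hpq)
  rw [ae_withDensity_iff (by fun_prop)] at hae
  filter_upwards [hae] with x hx
  rcases (hρ0 x).eq_or_lt with hρx | hρx
  · simp [← hρx]
  refine congrArg (ρ x * ·) (integral_congr_ae ?_)
  filter_upwards [Measure.ae_ae_of_ae_prod (hx (ENNReal.ofReal_pos.mpr hρx).ne')] with w' hw'
  refine congrArg (ρw w' * log ·) (integral_congr_ae ?_)
  filter_upwards [hw'] with w hw
  simp only [Function.comp_apply] at hw
  rw [add_sub_assoc, hw]

/-- Property of causality, stochastic mapping case: For the stochastic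
mapping `x(τ+1) = Φ(x(τ)) + Bw` on ℝⁿ (modelled as `ℝ × ℝ × (Fin k → ℝ)`) with `B`
constant (first row `B₁`) and `w` standard Gaussian independent of `x`, if `Φ₁` does
not depend on `x₂` then the information flow
`T_{2→1} = E_x[log E_w (P_{Φ∖2}ρ)₁(y₁ − B₁w)] − E_x[log E_w (P_Φρ)₁(y₁ − B₁w)]`
vanishes. -/
theorem stochastic_map_causality {k m : ℕ}
    (Φ : (ℝ × ℝ × (Fin k → ℝ)) → (ℝ × ℝ × (Fin k → ℝ))) (hΦ : Measurable Φ)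
    (hindep : ∀ (x₁ x₂ x₂' : ℝ) (z : Fin k → ℝ),
      (Φ (x₁, x₂, z)).1 = (Φ (x₁, x₂', z)).1)
    (Φm2 : (ℝ × (Fin k → ℝ)) → (ℝ × (Fin k → ℝ))) (hΦm2 : Measurable Φm2)
    (hreduced : ∀ (x₁ x₂ : ℝ) (z : Fin k → ℝ), (Φm2 (x₁, z)).1 = (Φ (x₁, x₂, z)).1)
    (B₁ : Fin m → ℝ)
    (ρw : (Fin m → ℝ) → ℝ)
    (hρw : ∀ v : Fin m → ℝ,
      ρw v = (2 * π) ^ (-(m : ℝ) / 2) * Real.exp (-(∑ i, v i ^ 2) / 2))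
    (ρ : (ℝ × ℝ × (Fin k → ℝ)) → ℝ) (hρmeas : Measurable ρ)
    (hρ0 : ∀ x, 0 ≤ ρ x) (hρint : Integrable ρ)
    (ρm2 : (ℝ × (Fin k → ℝ)) → ℝ)
    (hρm2 : ∀ (x₁ : ℝ) (z : Fin k → ℝ), ρm2 (x₁, z) = ∫ x₂ : ℝ, ρ (x₁, x₂, z))
    (p q : ℝ → ℝ)
    (hp : ∀ s : Set ℝ, MeasurableSet s →
      ∫ t in s, p t = ∫ x in {x : ℝ × ℝ × (Fin k → ℝ) | (Φ x).1 ∈ s}, ρ x)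
    (hq : ∀ s : Set ℝ, MeasurableSet s →
      ∫ t in s, q t = ∫ x in {x : ℝ × (Fin k → ℝ) | (Φm2 x).1 ∈ s}, ρm2 x) :
    (∫ x : ℝ × ℝ × (Fin k → ℝ), ρ x * ∫ w' : Fin m → ℝ, ρw w' *
        Real.log (∫ w : Fin m → ℝ, ρw w * q ((Φ x).1 + B₁ ⬝ᵥ w' - B₁ ⬝ᵥ w)))
      - (∫ x : ℝ × ℝ × (Fin k → ℝ), ρ x * ∫ w' : Fin m → ℝ, ρw w' *
        Real.log (∫ w : Fin m → ℝ, ρw w * p ((Φ x).1 + B₁ ⬝ᵥ w' - B₁ ⬝ᵥ w))) = 0 :=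
  stochastic_map_causality_general Φ hΦ Φm2 hreduced B₁ ρw ρ hρmeas hρ0 hρint ρm2 hρm2 p q hp hq
end
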